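/- Let Λ ⊆ ℝ^d be a repetitive Delone set of finite local complexity, let V : ℝ^d → ℝ be a bounded C³ Λ-equivariant non-degenerate function admitting a uniform local inverse family with constants R_V, K_V, let A ∈ GL(d,ℝ) be expanding with constant μ > 1, let L : ℝ^r → ℝ^d be a linear map, R > 0, ε > 0, and let (𝒮, (H_B)) be an interaction satisfying condition (H2). Then there exist N ∈ ℕ and ε' > 0 such that for every integer n ≥ N, every a : ℤ^r → ℝ^d with A^n (a i) ∈ Z_V and ‖a i - L i‖ ≤ R for all i, and every configuration u with sup_i ‖u i - a i‖ ≤ ε, one has ‖((A^n)ᵀ)^{-1} Q_i(u)‖ ≤ R_V (so that K_{A^n (a i)}(-((A^n)ᵀ)^{-1} Q_i(u)) is defined) and ‖A^{-n} K_{A^n (a i)}(-((A^n)ᵀ)^{-1} Q_i(u)) - a i‖ ≤ ε' for all i ∈ ℤ^r. -/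

import Mathlib

open Metric Set

noncomputable section

abbrev Euc (d : ℕ) : Type := EuclideanSpace ℝ (Fin d)

/-- The translate `Λ - y` of a point set. -/
def translateSet {d : ℕ} (Λ : Set (Euc d)) (y : Euc d) : Set (Euc d) :=
  (fun x => x - y) '' Λ

/-- A Delone set: uniformly discrete and relatively dense. -/
def IsDeloneSet {d : ℕ} (Λ : Set (Euc d)) : Prop :=
  (∃ r > 0, ∀ x ∈ Λ, ∀ y ∈ Λ, x ≠ y → r ≤ dist x y) ∧
  (∃ R > 0, ∀ y : Euc d, ∃ x ∈ Λ, x ∈ closedBall y R)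

/-- Finite local complexity. -/
def HasFLC {d : ℕ} (Λ : Set (Euc d)) : Prop :=
  ∀ R > 0, {s : Set (Euc d) | ∃ y : Euc d, s = translateSet Λ y ∩ closedBall 0 R}.Finite

/-- Repetitivity. -/
def IsRepetitive {d : ℕ} (Λ : Set (Euc d)) : Prop :=
  ∀ C : Set (Euc d), C ⊆ Λ → C.Finite →
    ∃ R > 0, ∀ y : Euc d, ∃ t : Euc d,
      (fun x => x + t) '' C ⊆ Λ ∧ (fun x => x + t) '' C ⊆ closedBall y R

/-- Λ-equivariant (pattern-equivariant) function. -/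
def IsPatternEquivariant {d : ℕ} (Λ : Set (Euc d)) (f : Euc d → ℝ) : Prop :=
  Continuous f ∧ ∃ R₀ > 0, ∀ x y : Euc d,
    translateSet Λ x ∩ closedBall 0 R₀ = translateSet Λ y ∩ closedBall 0 R₀ → f x = f y

/-- The Hessian of `V` at `x`, as the derivative of the gradient. -/
def Hess {d : ℕ} (V : Euc d → ℝ) (x : Euc d) : Euc d →L[ℝ] Euc d :=
  fderiv ℝ (gradient V) x

/-- The set of non-degenerate critical points of `V`. -/
def ZSet {d : ℕ} (V : Euc d → ℝ) : Set (Euc d) :=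
  {x | gradient V x = 0 ∧ IsUnit (Hess V x)}

/-- Non-degenerate potential: some point has vanishing gradient and invertible Hessian. -/
def NonDegeneratePotential {d : ℕ} (V : Euc d → ℝ) : Prop :=
  ∃ z : Euc d, gradient V z = 0 ∧ IsUnit (Hess V z)

/-- Bounded and C³. -/
def BoundedC3 {d : ℕ} (V : Euc d → ℝ) : Prop :=
  ContDiff ℝ 3 V ∧ ∃ M : ℝ, ∀ x, |V x| ≤ M

/-- Relatively dense subset of ℝ^d. -/
def RelativelyDense {d : ℕ} (S : Set (Euc d)) : Prop :=
  ∃ R > 0, ∀ y : Euc d, ∃ x ∈ S, x ∈ closedBall y R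

/-- An expanding linear automorphism with constant μ. -/
def Expanding {d : ℕ} (A : Euc d ≃L[ℝ] Euc d) (μ : ℝ) : Prop :=
  1 < μ ∧ ∀ x : Euc d, μ * ‖x‖ ≤ ‖A x‖

abbrev ZLat (r : ℕ) : Type := Fin r → ℤ

/-- The canonical embedding ℤ^r → ℝ^r. -/
def latCast {r : ℕ} (i : ZLat r) : EuclideanSpace ℝ (Fin r) :=
  WithLp.toLp 2 (fun k => (i k : ℝ))

abbrev Config (r d : ℕ) : Type := ZLat r → Euc d

/-- A configuration is of type σ(R) for the linear map L. -/
def OfTypeR {r d : ℕ} (L : EuclideanSpace ℝ (Fin r) →ₗ[ℝ] Euc d) (R : ℝ)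
    (u : Config r d) : Prop :=
  ∀ i : ZLat r, ‖u i - L (latCast i)‖ ≤ R

/-- An interaction: a collection of finite subsets of ℤ^r of cardinality ≥ 2, each index
lying in only finitely many of them, together with local functions H_B. -/
structure Interaction (r d : ℕ) where
  S : Set (Finset (ZLat r))
  card_ge : ∀ B ∈ S, 2 ≤ B.card
  locFin : ∀ i : ZLat r, {B | B ∈ S ∧ i ∈ B}.Finite
  H : Finset (ZLat r) → Config r d → ℝ
  local_dep : ∀ B ∈ S, ∀ u v : Config r d, (∀ j ∈ B, u j = v j) → H B u = H B v

namespace Interaction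

variable {r d : ℕ} (I : Interaction r d)

/-- The finite collection of interaction sets containing `i`. -/
def Si (i : ZLat r) : Finset (Finset (ZLat r)) := (I.locFin i).toFinset

/-- F_i(u) = Σ_{B ∈ 𝒮, i ∈ B} H_B(u). -/
def F (i : ZLat r) (u : Config r d) : ℝ := ∑ B ∈ I.Si i, I.H B u

/-- Q_i(u): the gradient of F_i with respect to the variable u_i. -/
def Q (i : ZLat r) (u : Config r d) : Euc d :=
  gradient (fun x => I.F i (Function.update u i x)) (u i)

/-- The finite set of indices that F_i depends on. -/
def J (i : ZLat r) : Finset (ZLat r) := (I.Si i).biUnion id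

/-- Patch a configuration using local data on `J i`. -/
def patch (i : ZLat r) (u : Config r d) (w : {j // j ∈ I.J i} → Euc d) : Config r d :=
  fun j => if h : j ∈ I.J i then w ⟨j, h⟩ else u j

/-- Restriction of a configuration to the finitely many variables `J i`. -/
def restr (i : ZLat r) (u : Config r d) : {j // j ∈ I.J i} → Euc d := fun j => u j.1

/-- F_i as a function of its finitely many variables. -/
def locF (i : ZLat r) (u : Config r d) : ({j // j ∈ I.J i} → Euc d) → ℝ :=
  fun w => I.F i (I.patch i u w)

/-- The full Hessian of F_i at u, in the finitely many variables `(u_j)_{j ∈ J i}`. -/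
def HessF (i : ZLat r) (u : Config r d) :
    ({j // j ∈ I.J i} → Euc d) →L[ℝ] ({j // j ∈ I.J i} → Euc d) →L[ℝ] ℝ :=
  fderiv ℝ (fderiv ℝ (I.locF i u)) (I.restr i u)

/-- Each F_i is C² in its finitely many variables. -/
def IsC2 : Prop := ∀ (i : ZLat r) (u : Config r d), ContDiff ℝ 2 (I.locF i u)

/-- Condition (H2). -/
def SatisfiesH2 : Prop :=
  ∀ (L : EuclideanSpace ℝ (Fin r) →ₗ[ℝ] Euc d) (R : ℝ), 0 < R →
    ∃ C : ℝ, ∀ u : Config r d, OfTypeR L R u →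
      ∀ i : ZLat r, ‖I.Q i u‖ + ‖I.HessF i u‖ ≤ C

end Interaction

/-- A uniform local inverse family for ∇V over the non-degenerate zero set. -/
def UnifLocalInv {d : ℕ} (V : Euc d → ℝ) (K : Euc d → Euc d → Euc d)
    (RV KV : ℝ) : Prop :=
  0 < RV ∧ 0 < KV ∧ ∀ z ∈ ZSet V,
    ContDiffOn ℝ 1 (K z) (closedBall 0 RV) ∧
    (∀ x ∈ closedBall 0 RV, gradient V (K z x) = x) ∧
    K z 0 = z ∧
    ∀ x ∈ closedBall 0 RV, ‖fderivWithin ℝ (K z) (closedBall 0 RV) x‖ ≤ KV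

/-- The derivatives DK_z are Lipschitz with constant C, uniformly over z ∈ Z_V. -/
def LipDerivInv {d : ℕ} (V : Euc d → ℝ) (K : Euc d → Euc d → Euc d)
    (RV C : ℝ) : Prop :=
  ∀ z ∈ ZSet V, ∀ x ∈ closedBall (0 : Euc d) RV, ∀ x' ∈ closedBall (0 : Euc d) RV,
    ‖fderivWithin ℝ (K z) (closedBall 0 RV) x - fderivWithin ℝ (K z) (closedBall 0 RV) x'‖
      ≤ C * ‖x - x'‖

/-! The operator `((Aⁿ)ᵀ)⁻¹` has norm at most `μ⁻ⁿ`, while `Q_i` is uniformly bounded on the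
configurations of type `σ(R + ε)` by (H2); so for `n` large the argument of `K_{Aⁿ aᵢ}` lies in
the ball of radius `R_V`. There `K_z` is `K_V`-Lipschitz with `K_z 0 = z`, hence
`‖A⁻ⁿ K_{Aⁿ aᵢ}(ξ) - aᵢ‖ = ‖A⁻ⁿ (K_{Aⁿ aᵢ}(ξ) - Aⁿ aᵢ)‖ ≤ K_V R_V`. -/

open Filter ContinuousLinearMap

namespace Expanding

variable {d : ℕ} {A : Euc d ≃L[ℝ] Euc d} {μ : ℝ}

theorem pos (hA : Expanding A μ) : 0 < μ := zero_lt_one.trans hA.1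

theorem inv_pow_nonneg (hA : Expanding A μ) (n : ℕ) : 0 ≤ μ⁻¹ ^ n :=
  pow_nonneg (inv_nonneg.2 hA.pos.le) n

theorem inv_pow_le_one (hA : Expanding A μ) (n : ℕ) : μ⁻¹ ^ n ≤ 1 :=
  pow_le_one₀ (inv_nonneg.2 hA.pos.le) (inv_le_one_of_one_le₀ hA.1.le)

theorem pow_mul_norm_le (hA : Expanding A μ) (n : ℕ) (x : Euc d) :
    μ ^ n * ‖x‖ ≤ ‖(A ^ n) x‖ := by
  induction n with
  | zero => rw [pow_zero, pow_zero, one_mul]; rfl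
  | succ n ih =>
    calc μ ^ (n + 1) * ‖x‖ = μ * (μ ^ n * ‖x‖) := by ring
      _ ≤ μ * ‖(A ^ n) x‖ := by gcongr; exact hA.pos.le
      _ ≤ ‖A ((A ^ n) x)‖ := hA.2 _
      _ = ‖(A ^ (n + 1)) x‖ := by rw [pow_succ']; rfl

theorem norm_symm_pow_apply_le (hA : Expanding A μ) (n : ℕ) (y : Euc d) :
    ‖(A ^ n).symm y‖ ≤ μ⁻¹ ^ n * ‖y‖ := by
  have hμn : 0 < μ ^ n := pow_pos hA.pos n
  have h := hA.pow_mul_norm_le n ((A ^ n).symm y)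
  rw [ContinuousLinearEquiv.apply_symm_apply] at h
  rw [inv_pow, inv_mul_eq_div, le_div_iff₀ hμn, mul_comm]
  exact h

theorem norm_adjoint_symm_pow_apply_le (hA : Expanding A μ) (n : ℕ) (y : Euc d) :
    ‖adjoint (((A ^ n).symm : Euc d ≃L[ℝ] Euc d) : Euc d →L[ℝ] Euc d) y‖ ≤ μ⁻¹ ^ n * ‖y‖ := by
  have hT : ‖(((A ^ n).symm : Euc d ≃L[ℝ] Euc d) : Euc d →L[ℝ] Euc d)‖ ≤ μ⁻¹ ^ n :=
    opNorm_le_bound _ (hA.inv_pow_nonneg n) (hA.norm_symm_pow_apply_le n)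
  calc _ ≤ ‖adjoint (((A ^ n).symm : Euc d ≃L[ℝ] Euc d) : Euc d →L[ℝ] Euc d)‖ * ‖y‖ :=
        le_opNorm _ _
    _ ≤ μ⁻¹ ^ n * ‖y‖ := by rw [LinearIsometryEquiv.norm_map]; gcongr

theorem eventually_pow_inv_mul_le (hA : Expanding A μ) (C : ℝ) {ρ : ℝ} (hρ : 0 < ρ) :
    ∀ᶠ n in atTop, μ⁻¹ ^ n * C ≤ ρ := by
  have h : Tendsto (fun n : ℕ => μ⁻¹ ^ n * C) atTop (nhds 0) := by
    simpa using (tendsto_pow_atTop_nhds_zero_of_lt_one (inv_nonneg.2 hA.pos.le)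
      (inv_lt_one_of_one_lt₀ hA.1)).mul_const C
  exact h.eventually (ge_mem_nhds hρ)

end Expanding

theorem OfTypeR.of_norm_sub_le {r d : ℕ} {L : EuclideanSpace ℝ (Fin r) →ₗ[ℝ] Euc d}
    {R ε : ℝ} {a u : Config r d} (ha : OfTypeR L R a) (hu : ∀ i, ‖u i - a i‖ ≤ ε) :
    OfTypeR L (R + ε) u := fun i =>
  calc ‖u i - L (latCast i)‖ = ‖(u i - a i) + (a i - L (latCast i))‖ := by abel_nf
    _ ≤ ‖u i - a i‖ + ‖a i - L (latCast i)‖ := norm_add_le _ _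
    _ ≤ R + ε := by linarith [hu i, ha i]

theorem Interaction.SatisfiesH2.exists_norm_Q_le {r d : ℕ} {I : Interaction r d}
    (hH2 : I.SatisfiesH2) (L : EuclideanSpace ℝ (Fin r) →ₗ[ℝ] Euc d) {R : ℝ} (hR : 0 < R) :
    ∃ C : ℝ, ∀ u : Config r d, OfTypeR L R u → ∀ i, ‖I.Q i u‖ ≤ C := by
  obtain ⟨C, hC⟩ := hH2 L R hR
  exact ⟨C, fun u hu i => by linarith [hC u hu i, norm_nonneg (I.HessF i u)]⟩

theorem UnifLocalInv.norm_sub_le {d : ℕ} {V : Euc d → ℝ} {K : Euc d → Euc d → Euc d}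
    {RV KV : ℝ} (hK : UnifLocalInv V K RV KV) {z : Euc d} (hz : z ∈ ZSet V) {ξ : Euc d}
    (hξ : ‖ξ‖ ≤ RV) : ‖K z ξ - z‖ ≤ KV * ‖ξ‖ := by
  obtain ⟨hKdiff, -, hK0, hKder⟩ := hK.2.2 z hz
  have h := (convex_closedBall (0 : Euc d) RV).norm_image_sub_le_of_norm_fderivWithin_le
    (hKdiff.differentiableOn one_ne_zero) hKder (mem_closedBall_self hK.1.le)
    (mem_closedBall_zero_iff.2 hξ)
  rwa [hK0, sub_zero] at h

theorem antiIntegrable_map_wellDefined_selfAffine_general {d r : ℕ}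
    (V : Euc d → ℝ)
    (K : Euc d → Euc d → Euc d) (RV KV : ℝ) (hK : UnifLocalInv V K RV KV)
    (A : Euc d ≃L[ℝ] Euc d) (μ : ℝ) (hA : Expanding A μ)
    (L : EuclideanSpace ℝ (Fin r) →ₗ[ℝ] Euc d) (R : ℝ) (hR : 0 < R) (ε : ℝ) (hε : 0 < ε)
    (I : Interaction r d) (hH2 : I.SatisfiesH2) :
    ∃ N : ℕ, ∃ ε' > (0 : ℝ), ∀ n : ℕ, n ≥ N →
      ∀ a : Config r d,
        (∀ i : ZLat r, (A ^ n) (a i) ∈ ZSet V ∧ ‖a i - L (latCast i)‖ ≤ R) →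
        ∀ u : Config r d, (∀ i : ZLat r, ‖u i - a i‖ ≤ ε) →
          ∀ i : ZLat r,
            ‖ContinuousLinearMap.adjoint
                (((A ^ n).symm : Euc d ≃L[ℝ] Euc d) : Euc d →L[ℝ] Euc d) (I.Q i u)‖ ≤ RV ∧
            ‖(A ^ n).symm (K ((A ^ n) (a i))
                (-(ContinuousLinearMap.adjoint
                    (((A ^ n).symm : Euc d ≃L[ℝ] Euc d) : Euc d →L[ℝ] Euc d) (I.Q i u))))
              - a i‖ ≤ ε' := by
  obtain ⟨C, hC⟩ := hH2.exists_norm_Q_le L (add_pos hR hε)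
  obtain ⟨N, hN⟩ := eventually_atTop.1 (hA.eventually_pow_inv_mul_le C hK.1)
  refine ⟨N, KV * RV, mul_pos hK.2.1 hK.1, fun n hn a ha u hu i => ?_⟩
  set ξ := -adjoint (((A ^ n).symm : Euc d ≃L[ℝ] Euc d) : Euc d →L[ℝ] Euc d) (I.Q i u)
  have hQ : ‖I.Q i u‖ ≤ C := hC u (OfTypeR.of_norm_sub_le (fun j => (ha j).2) hu) i
  have hμn := hA.inv_pow_nonneg n
  have hξ : ‖ξ‖ ≤ RV := by
    calc ‖ξ‖ ≤ μ⁻¹ ^ n * ‖I.Q i u‖ := by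
          rw [norm_neg]; exact hA.norm_adjoint_symm_pow_apply_le n _
      _ ≤ μ⁻¹ ^ n * C := by gcongr
      _ ≤ RV := hN n hn
  refine ⟨by rwa [norm_neg] at hξ, ?_⟩
  have hμn_le := hA.inv_pow_le_one n
  calc ‖(A ^ n).symm (K ((A ^ n) (a i)) ξ) - a i‖
      = ‖(A ^ n).symm (K ((A ^ n) (a i)) ξ - (A ^ n) (a i))‖ := by
        rw [map_sub, ContinuousLinearEquiv.symm_apply_apply]
    _ ≤ μ⁻¹ ^ n * ‖K ((A ^ n) (a i)) ξ - (A ^ n) (a i)‖ := hA.norm_symm_pow_apply_le n _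
    _ ≤ 1 * (KV * RV) := by
        gcongr
        calc _ ≤ KV * ‖ξ‖ := hK.norm_sub_le (ha i).1 hξ
          _ ≤ KV * RV := by gcongr; exact hK.2.1.le
    _ = KV * RV := one_mul _

/-- Lemma: the anti-integrable-limit map in the self-affine case is well defined
for n large. -/
theorem antiIntegrable_map_wellDefined_selfAffine {d r : ℕ}
    (Λ : Set (Euc d)) (hDel : IsDeloneSet Λ) (hRep : IsRepetitive Λ) (hFLC : HasFLC Λ)
    (V : Euc d → ℝ) (hV : BoundedC3 V) (hVeq : IsPatternEquivariant Λ V)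
    (hVnd : NonDegeneratePotential V)
    (K : Euc d → Euc d → Euc d) (RV KV : ℝ) (hK : UnifLocalInv V K RV KV)
    (A : Euc d ≃L[ℝ] Euc d) (μ : ℝ) (hA : Expanding A μ)
    (L : EuclideanSpace ℝ (Fin r) →ₗ[ℝ] Euc d) (R : ℝ) (hR : 0 < R) (ε : ℝ) (hε : 0 < ε)
    (I : Interaction r d) (hC2 : I.IsC2) (hH2 : I.SatisfiesH2) :
    ∃ N : ℕ, ∃ ε' > (0 : ℝ), ∀ n : ℕ, n ≥ N →
      ∀ a : Config r d,
        (∀ i : ZLat r, (A ^ n) (a i) ∈ ZSet V ∧ ‖a i - L (latCast i)‖ ≤ R) →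
        ∀ u : Config r d, (∀ i : ZLat r, ‖u i - a i‖ ≤ ε) →
          ∀ i : ZLat r,
            ‖ContinuousLinearMap.adjoint
                (((A ^ n).symm : Euc d ≃L[ℝ] Euc d) : Euc d →L[ℝ] Euc d) (I.Q i u)‖ ≤ RV ∧
            ‖(A ^ n).symm (K ((A ^ n) (a i))
                (-(ContinuousLinearMap.adjoint
                    (((A ^ n).symm : Euc d ≃L[ℝ] Euc d) : Euc d →L[ℝ] Euc d) (I.Q i u))))
              - a i‖ ≤ ε' :=
  antiIntegrable_map_wellDefined_selfAffine_general V K RV KV hK A μ hA L R hR ε hε I hH2
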